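/- The function k ↦ N_{k(1,1), k(1,1), k(1,1)} equals ⌈(k+1)/2⌉ for all positive integers k; in particular it is not a polynomial in k. -/

import Mathlib

open YoungDiagram

/-- An LR (Littlewood–Richardson) filling witnessing the Littlewood–Richardson
coefficient `c^lam_{μ,ν}`: a ballot (lattice-word) semistandard filling of the skew
shape `lam/μ` with content `ν`.  The entry in row `i`, column `j` is `T i j`;
entries are `≥ 1` on the cells of `lam/μ` and `0` elsewhere. -/
structure LRFilling (μ ν lam : YoungDiagram) : Type where
  sub : μ ≤ lam
  T : ℕ → ℕ → ℕ
  supp : ∀ i j, T i j ≠ 0 ↔ ((i, j) ∈ lam ∧ (i, j) ∉ μ)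
  rows_weak : ∀ i j₁ j₂, j₁ ≤ j₂ → T i j₁ ≠ 0 → T i j₂ ≠ 0 → T i j₁ ≤ T i j₂
  cols_strict : ∀ i₁ i₂ j, i₁ < i₂ → T i₁ j ≠ 0 → T i₂ j ≠ 0 → T i₁ j < T i₂ j
  content : ∀ k : ℕ, Nat.card {p : ℕ × ℕ // T p.1 p.2 = k + 1} = ν.rowLen k
  ballot : ∀ i j k : ℕ,
    Nat.card {p : ℕ × ℕ // (p.1 < i ∨ (p.1 = i ∧ j ≤ p.2)) ∧ T p.1 p.2 = k + 2} ≤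
      Nat.card {p : ℕ × ℕ // (p.1 < i ∨ (p.1 = i ∧ j ≤ p.2)) ∧ T p.1 p.2 = k + 1}

/-- The Littlewood–Richardson coefficient `c^lam_{μ,ν}`. -/
noncomputable def lrCoeff (μ ν lam : YoungDiagram) : ℕ := Nat.card (LRFilling μ ν lam)

/-- The Newell–Littlewood number
`N_{μ,ν,lam} = Σ_{α,β,γ} c^μ_{α,β} c^ν_{α,γ} c^lam_{β,γ}`,
realized as the cardinality of the set of triples of LR fillings over all `α,β,γ`. -/
noncomputable def NL (μ ν lam : YoungDiagram) : ℕ :=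
  Nat.card (Σ α β γ : YoungDiagram,
    (LRFilling α β μ × LRFilling α γ ν × LRFilling β γ lam))


/-- The two-row rectangle `(k, k)` = `k·(1,1)`. -/
def twoRowRect (k : ℕ) : YoungDiagram :=
  YoungDiagram.ofRowLens [k, k] (by simp [List.sortedGE_iff_pairwise])

/-!
Every LR filling of `(k, k) / α` is forced: the ballot condition makes row `0` all `1`s and
row `1` at most `2`, column strictness puts `2`s below the `1`s of row `0`, and the ballot
condition again puts `1`s in the rest of row `1`. So `c^{(k,k)}_{α,β}` is `1` when `β` is the
rotated complement of `α` and `0` otherwise, and the triples counted by `N` are indexed by the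
self-complementary `α = (k - b, b)` with `b ≤ k / 2`: there are `⌊k/2⌋ + 1 = ⌈(k+1)/2⌉` of
them. A polynomial agreeing with this at every even `k` is `k/2 + 1`, which fails at `k = 1`.
-/

open Finset

theorem YoungDiagram.ext_rowLen {μ ν : YoungDiagram} (h : ∀ i, μ.rowLen i = ν.rowLen i) :
    μ = ν := by
  ext ⟨i, j⟩
  simp only [mem_cells, mem_iff_lt_rowLen, h]

theorem YoungDiagram.rowLen_eq_of_mem_iff {μ : YoungDiagram} {i n : ℕ}
    (h : ∀ j, (i, j) ∈ μ ↔ j < n) : μ.rowLen i = n :=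
  eq_of_forall_lt_iff fun j => mem_iff_lt_rowLen.symm.trans (h j)

theorem YoungDiagram.rowLen_le_rowLen {μ ν : YoungDiagram} (h : μ ≤ ν) (i : ℕ) :
    μ.rowLen i ≤ ν.rowLen i := by
  by_contra! hlt
  exact (mem_iff_lt_rowLen.mp (h (mem_iff_lt_rowLen.mpr hlt))).false

def twoRow (a b : ℕ) (h : b ≤ a) : YoungDiagram :=
  ofRowLens [a, b] (by simp [List.sortedGE_iff_pairwise, h])

section TwoRow

variable {a b : ℕ} {h : b ≤ a}

theorem mem_twoRow {i j : ℕ} : (i, j) ∈ twoRow a b h ↔ (i = 0 ∧ j < a) ∨ (i = 1 ∧ j < b) := by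
  rw [twoRow, mem_ofRowLens]
  match i with
  | 0 => simp
  | 1 => simp
  | n + 2 => simp

@[simp]
theorem rowLen_twoRow_zero : (twoRow a b h).rowLen 0 = a :=
  rowLen_eq_of_mem_iff fun _ => by simp [mem_twoRow]

@[simp]
theorem rowLen_twoRow_one : (twoRow a b h).rowLen 1 = b :=
  rowLen_eq_of_mem_iff fun _ => by simp [mem_twoRow]

@[simp]
theorem rowLen_twoRow_add_two (n : ℕ) : (twoRow a b h).rowLen (n + 2) = 0 :=
  rowLen_eq_of_mem_iff fun _ => by simp [mem_twoRow]

theorem eq_twoRow_iff {μ : YoungDiagram} :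
    μ = twoRow a b h ↔ μ.rowLen 0 = a ∧ μ.rowLen 1 = b ∧ μ.rowLen 2 = 0 := by
  refine ⟨by rintro rfl; simp, fun ⟨h0, h1, h2⟩ => ext_rowLen fun i => ?_⟩
  match i with
  | 0 => simp [h0]
  | 1 => simp [h1]
  | n + 2 => simpa using Nat.eq_zero_of_le_zero (h2 ▸ μ.rowLen_anti 2 (n + 2) (by omega))

end TwoRow

theorem twoRowRect_eq_twoRow (k : ℕ) : twoRowRect k = twoRow k k le_rfl := rfl

theorem mem_twoRowRect {k i j : ℕ} : (i, j) ∈ twoRowRect k ↔ i < 2 ∧ j < k := by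
  rw [twoRowRect_eq_twoRow, mem_twoRow]
  omega

theorem rowLen_le_of_le_twoRowRect {k : ℕ} {α : YoungDiagram} (hα : α ≤ twoRowRect k) :
    α.rowLen 1 ≤ α.rowLen 0 ∧ α.rowLen 0 ≤ k ∧ α.rowLen 2 = 0 := by
  have h0 := rowLen_le_rowLen hα 0
  have h2 := rowLen_le_rowLen hα 2
  simp only [twoRowRect_eq_twoRow, rowLen_twoRow_zero, rowLen_twoRow_add_two] at h0 h2
  exact ⟨α.rowLen_anti 0 1 zero_le_one, h0, Nat.eq_zero_of_le_zero h2⟩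

/-- The 180°-rotated complement of `α` in the `2 × k` rectangle; meaningful for
`α ≤ twoRowRect k`, since it only reads the first two rows of `α`. -/
def rectCompl (k : ℕ) (α : YoungDiagram) : YoungDiagram :=
  twoRow (k - α.rowLen 1) (k - α.rowLen 0)
    (Nat.sub_le_sub_left (α.rowLen_anti 0 1 zero_le_one) k)

theorem rectCompl_rectCompl {k : ℕ} {α : YoungDiagram} (hα : α ≤ twoRowRect k) :
    rectCompl k (rectCompl k α) = α := by
  obtain ⟨h10, h0k, h2⟩ := rowLen_le_of_le_twoRowRect hα
  refine (eq_twoRow_iff.mpr ⟨?_, ?_, h2⟩).symm <;>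
    simp only [rectCompl, rowLen_twoRow_zero, rowLen_twoRow_one] <;> omega

theorem rectCompl_eq_self_iff {k : ℕ} {α : YoungDiagram} (hα : α ≤ twoRowRect k) :
    rectCompl k α = α ↔ α.rowLen 0 + α.rowLen 1 = k := by
  obtain ⟨h10, h0k, h2⟩ := rowLen_le_of_le_twoRowRect hα
  rw [eq_comm, rectCompl, eq_twoRow_iff]
  omega

theorem Nat.card_subtype_le_card {α : Type*} {P : α → Prop} (s : Finset α)
    (h : ∀ a, P a → a ∈ s) : Nat.card {a // P a} ≤ s.card := by
  rw [← Set.ncard_coe_finset]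
  exact Set.ncard_le_ncard h s.finite_toSet

theorem Nat.card_le_card_subtype {α : Type*} {P : α → Prop} [Finite {a // P a}] (s : Finset α)
    (h : ∀ a ∈ s, P a) : s.card ≤ Nat.card {a // P a} := by
  rw [← Set.ncard_coe_finset]
  exact Set.ncard_le_ncard h (Set.finite_coe_iff.mp ‹_›)

/-- The cells read up to `(i, j)` in the reading word (rows top to bottom, each right to left),
over which `LRFilling.ballot` counts. -/
def ReadBy (i j : ℕ) (p : ℕ × ℕ) : Prop := p.1 < i ∨ (p.1 = i ∧ j ≤ p.2)

theorem ballot_of_forall_eq_add_two {T : ℕ → ℕ → ℕ}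
    (hT : {p : ℕ × ℕ | T p.1 p.2 ≠ 0}.Finite)
    (h : ∀ i j v, T i j = v + 2 → 0 < i ∧ T (i - 1) j = v + 1) (i j v : ℕ) :
    Nat.card {p : ℕ × ℕ // ReadBy i j p ∧ T p.1 p.2 = v + 2} ≤
      Nat.card {p : ℕ × ℕ // ReadBy i j p ∧ T p.1 p.2 = v + 1} := by
  have : Finite {p : ℕ × ℕ // ReadBy i j p ∧ T p.1 p.2 = v + 1} :=
    hT.subset (fun p hp => by simp [hp.2]) |>.to_subtype
  refine Nat.card_le_card_of_injective
    (fun p => ⟨(p.1.1 - 1, p.1.2), ?_, (h _ _ _ p.2.2).2⟩) fun p q hpq => ?_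
  · have := (h _ _ _ p.2.2).1
    have := p.2.1
    unfold ReadBy at *
    omega
  · have := (h _ _ _ p.2.2).1
    have := (h _ _ _ q.2.2).1
    simp only [Subtype.mk.injEq, Prod.mk.injEq] at hpq
    exact Subtype.ext (Prod.ext (by omega) hpq.2)

namespace LRFilling

variable {μ ν lam : YoungDiagram} (F : LRFilling μ ν lam)

theorem T_injective : Function.Injective (LRFilling.T : LRFilling μ ν lam → ℕ → ℕ → ℕ) := by
  rintro ⟨⟩ ⟨⟩ rfl
  rfl

theorem finite_T_ne_zero : {p : ℕ × ℕ | F.T p.1 p.2 ≠ 0}.Finite :=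
  lam.cells.finite_toSet.subset fun p hp => ((F.supp p.1 p.2).1 hp).1

theorem exists_readBy_eq_add_one {i j v : ℕ} (h : F.T i j = v + 2) :
    ∃ p : ℕ × ℕ, ReadBy i j p ∧ F.T p.1 p.2 = v + 1 := by
  have : Finite {p : ℕ × ℕ // ReadBy i j p ∧ F.T p.1 p.2 = v + 2} :=
    F.finite_T_ne_zero.subset (fun p hp => by simp [hp.2]) |>.to_subtype
  have hpos : 0 < Nat.card {p : ℕ × ℕ // ReadBy i j p ∧ F.T p.1 p.2 = v + 2} :=
    Nat.card_pos_iff.2 ⟨⟨⟨(i, j), Or.inr ⟨rfl, le_rfl⟩, h⟩⟩, this⟩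
  obtain ⟨⟨p, hp⟩⟩ := (Nat.card_pos_iff.1 (hpos.trans_le (F.ballot i j v))).1
  exact ⟨p, hp⟩

theorem T_zero_eq_one {j : ℕ} (h : F.T 0 j ≠ 0) : F.T 0 j = 1 := by
  by_contra hne
  obtain ⟨⟨i', j'⟩, hread, hT⟩ :=
    F.exists_readBy_eq_add_one (i := 0) (j := j) (v := F.T 0 j - 2) (by omega)
  simp only at hT
  obtain ⟨rfl, hjj'⟩ : i' = 0 ∧ j ≤ j' := by unfold ReadBy at hread; omega
  have := F.rows_weak 0 j j' hjj' h (by omega)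
  omega

theorem T_one_le_two (j : ℕ) : F.T 1 j ≤ 2 := by
  by_contra! hgt
  obtain ⟨⟨i', j'⟩, hread, hT⟩ :=
    F.exists_readBy_eq_add_one (i := 1) (j := j) (v := F.T 1 j - 2) (by omega)
  simp only at hT
  obtain rfl | ⟨rfl, hjj'⟩ : i' = 0 ∨ (i' = 1 ∧ j ≤ j') := by unfold ReadBy at hread; omega
  · have := F.T_zero_eq_one (j := j') (by omega)
    omega
  · have := F.rows_weak 1 j j' hjj' (by omega) (by omega)
    omega

end LRFilling

def rectEntry (k a b i j : ℕ) : ℕ :=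
  if i = 0 ∧ a ≤ j ∧ j < k then 1
  else if i = 1 ∧ b ≤ j ∧ j < a then 1
  else if i = 1 ∧ a ≤ j ∧ j < k then 2
  else 0

section RectEntry

variable {k a b : ℕ}

theorem rectEntry_eq_one_iff {i j : ℕ} :
    rectEntry k a b i j = 1 ↔ (i = 0 ∧ a ≤ j ∧ j < k) ∨ (i = 1 ∧ b ≤ j ∧ j < a) := by
  unfold rectEntry
  grind

theorem rectEntry_eq_two_iff {i j : ℕ} : rectEntry k a b i j = 2 ↔ i = 1 ∧ a ≤ j ∧ j < k := by
  unfold rectEntry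
  grind

theorem rectEntry_le_two (i j : ℕ) : rectEntry k a b i j ≤ 2 := by
  unfold rectEntry
  split_ifs <;> omega

theorem card_singleton_product_union (A B : Finset ℕ) :
    ({0} ×ˢ A ∪ {1} ×ˢ B).card = A.card + B.card := by
  rw [card_union_of_disjoint (by simp [disjoint_left])]
  simp

theorem card_rectEntry_eq (hba : b ≤ a) (hak : a ≤ k) (v : ℕ) :
    Nat.card {p : ℕ × ℕ // rectEntry k a b p.1 p.2 = v + 1} =
      (twoRow (k - b) (k - a) (by omega)).rowLen v := by
  match v with
  | 0 =>
    rw [Nat.subtype_card ({0} ×ˢ Ico a k ∪ {1} ×ˢ Ico b a) fun p => by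
      simp only [zero_add, rectEntry_eq_one_iff, mem_union, mem_product, mem_singleton,
        mem_Ico]]
    simp only [card_singleton_product_union, Nat.card_Ico, rowLen_twoRow_zero]
    omega
  | 1 =>
    rw [Nat.subtype_card ({1} ×ˢ Ico a k) fun p => by
      simp only [Nat.reduceAdd, rectEntry_eq_two_iff, mem_product, mem_singleton, mem_Ico]]
    simp
  | n + 2 =>
    have : IsEmpty {p : ℕ × ℕ // rectEntry k a b p.1 p.2 = n + 2 + 1} :=
      ⟨fun p => by have := rectEntry_le_two (k := k) (a := a) (b := b) p.1.1 p.1.2; omega⟩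
    simp

theorem rectEntry_ne_zero_iff {α : YoungDiagram} (hα : α ≤ twoRowRect k) {i j : ℕ} :
    rectEntry k (α.rowLen 0) (α.rowLen 1) i j ≠ 0 ↔ (i, j) ∈ twoRowRect k ∧ (i, j) ∉ α := by
  obtain ⟨h10, h0k, -⟩ := rowLen_le_of_le_twoRowRect hα
  rw [mem_twoRowRect, mem_iff_lt_rowLen]
  unfold rectEntry
  obtain rfl | rfl | hi : i = 0 ∨ i = 1 ∨ 2 ≤ i := by omega
  all_goals grind

end RectEntry

def rectFilling {k : ℕ} {α : YoungDiagram} (hα : α ≤ twoRowRect k) :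
    LRFilling α (rectCompl k α) (twoRowRect k) where
  sub := hα
  T := rectEntry k (α.rowLen 0) (α.rowLen 1)
  supp _ _ := rectEntry_ne_zero_iff hα
  rows_weak := by
    intro i j₁ j₂ _ _ _
    unfold rectEntry at *
    split_ifs at * <;> omega
  cols_strict := by
    intro i₁ i₂ j _ _ _
    unfold rectEntry at *
    split_ifs at * <;> omega
  content := card_rectEntry_eq (α.rowLen_anti 0 1 zero_le_one)
    (rowLen_le_of_le_twoRowRect hα).2.1
  ballot := by
    refine ballot_of_forall_eq_add_two ?_ fun i j v h => ?_
    · exact (twoRowRect k).cells.finite_toSet.subset fun p hp =>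
        ((rectEntry_ne_zero_iff hα).1 hp).1
    · obtain rfl : v = 0 := by
        have := rectEntry_le_two (k := k) (a := α.rowLen 0) (b := α.rowLen 1) i j
        omega
      obtain ⟨rfl, hj⟩ := rectEntry_eq_two_iff.1 h
      exact ⟨one_pos, rectEntry_eq_one_iff.2 (Or.inl ⟨rfl, hj⟩)⟩

namespace LRFilling

variable {k : ℕ} {α β : YoungDiagram} (F : LRFilling α β (twoRowRect k))

theorem T_ne_zero_iff {i j : ℕ} : F.T i j ≠ 0 ↔ i < 2 ∧ α.rowLen i ≤ j ∧ j < k := by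
  rw [F.supp, mem_twoRowRect, mem_iff_lt_rowLen]
  omega

theorem T_one_eq_two {j : ℕ} (hj : α.rowLen 0 ≤ j) (hjk : j < k) : F.T 1 j = 2 := by
  have h10 := α.rowLen_anti 0 1 zero_le_one
  have h0 : F.T 0 j = 1 := F.T_zero_eq_one (F.T_ne_zero_iff.2 ⟨by omega, hj, hjk⟩)
  have h1 : F.T 1 j ≠ 0 := F.T_ne_zero_iff.2 ⟨by omega, by omega, hjk⟩
  have := F.cols_strict 0 1 j zero_lt_one (by omega) h1
  have := F.T_one_le_two j
  omega

theorem T_one_eq_one {j : ℕ} (hj : α.rowLen 1 ≤ j) (hj' : j < α.rowLen 0) : F.T 1 j = 1 := by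
  obtain ⟨-, h0k, -⟩ := rowLen_le_of_le_twoRowRect F.sub
  have hne : F.T 1 j ≠ 0 := F.T_ne_zero_iff.2 ⟨one_lt_two, hj, by omega⟩
  by_contra h1
  have h2 : F.T 1 j = 2 := by have := F.T_one_le_two j; omega
  have : Finite {p : ℕ × ℕ // ReadBy 1 j p ∧ F.T p.1 p.2 = 0 + 2} :=
    F.finite_T_ne_zero.subset (fun p hp => by simp [hp.2]) |>.to_subtype
  -- The `2` at `(1, j)` forces `2`s along the rest of row `1`: read up to `(1, j)`, they
  -- outnumber the `1`s, all of which lie in row `0`.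
  have htwos : (({1} : Finset ℕ) ×ˢ Ico j k).card ≤
      Nat.card {p : ℕ × ℕ // ReadBy 1 j p ∧ F.T p.1 p.2 = 0 + 2} := by
    refine Nat.card_le_card_subtype _ fun ⟨i', j'⟩ hp => ?_
    simp only [mem_product, mem_singleton, mem_Ico] at hp
    obtain ⟨rfl, hjj', hj'k⟩ := hp
    have hne' : F.T 1 j' ≠ 0 := F.T_ne_zero_iff.2 ⟨one_lt_two, by omega, hj'k⟩
    have := F.rows_weak 1 j j' hjj' hne hne'
    have := F.T_one_le_two j'
    exact ⟨Or.inr ⟨rfl, hjj'⟩, show F.T 1 j' = 2 by omega⟩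
  have hones : Nat.card {p : ℕ × ℕ // ReadBy 1 j p ∧ F.T p.1 p.2 = 0 + 1} ≤
      (({0} : Finset ℕ) ×ˢ Ico (α.rowLen 0) k).card := by
    refine Nat.card_subtype_le_card _ fun ⟨i', j'⟩ ⟨hread, hT⟩ => ?_
    simp only [zero_add] at hT
    simp only [mem_product, mem_singleton, mem_Ico]
    obtain rfl | ⟨rfl, hjj'⟩ : i' = 0 ∨ (i' = 1 ∧ j ≤ j') := by unfold ReadBy at hread; omega
    · have := F.T_ne_zero_iff.1 (by omega : F.T 0 j' ≠ 0)
      omega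
    · have := F.rows_weak 1 j j' hjj' hne (by omega)
      omega
  have : Nat.card {p : ℕ × ℕ // ReadBy 1 j p ∧ F.T p.1 p.2 = 0 + 2} ≤
      Nat.card {p : ℕ × ℕ // ReadBy 1 j p ∧ F.T p.1 p.2 = 0 + 1} := F.ballot 1 j 0
  simp only [card_product, card_singleton, Nat.card_Ico, one_mul] at htwos hones
  omega

theorem T_eq_rectEntry : F.T = rectEntry k (α.rowLen 0) (α.rowLen 1) := by
  funext i j
  by_cases hij : (i, j) ∈ twoRowRect k ∧ (i, j) ∉ α
  · have hne := (F.supp i j).2 hij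
    obtain ⟨hi, hj, hjk⟩ := F.T_ne_zero_iff.1 hne
    obtain rfl | rfl : i = 0 ∨ i = 1 := by omega
    · rw [F.T_zero_eq_one hne, eq_comm, rectEntry_eq_one_iff]
      omega
    · by_cases hj0 : α.rowLen 0 ≤ j
      · rw [F.T_one_eq_two hj0 hjk, eq_comm, rectEntry_eq_two_iff]
        omega
      · rw [F.T_one_eq_one hj (by omega), eq_comm, rectEntry_eq_one_iff]
        omega
  · rw [not_ne_iff.1 (mt (F.supp i j).1 hij),
      not_ne_iff.1 (mt (rectEntry_ne_zero_iff F.sub).1 hij)]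

theorem eq_rectCompl (F : LRFilling α β (twoRowRect k)) : β = rectCompl k α := by
  refine ext_rowLen fun v => ?_
  rw [← F.content v, F.T_eq_rectEntry, rectCompl]
  exact card_rectEntry_eq (α.rowLen_anti 0 1 zero_le_one)
    (rowLen_le_of_le_twoRowRect F.sub).2.1 v

instance : Subsingleton (LRFilling α β (twoRowRect k)) :=
  ⟨fun F G => T_injective (F.T_eq_rectEntry.trans G.T_eq_rectEntry.symm)⟩

end LRFilling

abbrev SelfComplDiagram (k : ℕ) : Type :=
  {α : YoungDiagram // α ≤ twoRowRect k ∧ rectCompl k α = α}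

def SelfComplDiagram.triple {k : ℕ} (α : SelfComplDiagram k) :
    Σ α β γ : YoungDiagram, LRFilling α β (twoRowRect k) × LRFilling α γ (twoRowRect k) ×
      LRFilling β γ (twoRowRect k) :=
  let F : LRFilling α.1 α.1 (twoRowRect k) :=
    cast (congrArg (LRFilling α.1 · (twoRowRect k)) α.2.2) (rectFilling α.2.1)
  ⟨α, α, α, F, F, F⟩

theorem SelfComplDiagram.triple_bijective (k : ℕ) :
    Function.Bijective (SelfComplDiagram.triple (k := k)) := by
  refine ⟨fun α α' h => Subtype.ext (congrArg Sigma.fst h), ?_⟩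
  rintro ⟨α, β, γ, F₁, F₂, F₃⟩
  have hα : rectCompl k α = α := by
    rw [← F₂.eq_rectCompl, F₃.eq_rectCompl, F₁.eq_rectCompl, rectCompl_rectCompl F₁.sub]
  have hβ : β = α := F₁.eq_rectCompl.trans hα
  have hγ : γ = α := F₂.eq_rectCompl.trans hα
  subst β γ
  refine ⟨⟨α, F₁.sub, hα⟩, ?_⟩
  obtain ⟨F, hF⟩ : ∃ F, SelfComplDiagram.triple ⟨α, F₁.sub, hα⟩ = ⟨α, α, α, F, F, F⟩ :=
    ⟨_, rfl⟩
  rw [hF, Subsingleton.elim F₁ F, Subsingleton.elim F₂ F, Subsingleton.elim F₃ F]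

theorem twoRow_le_twoRowRect {a b k : ℕ} {h : b ≤ a} (hak : a ≤ k) :
    twoRow a b h ≤ twoRowRect k := fun ⟨i, j⟩ hc => by
  rw [mem_twoRow] at hc
  exact mem_twoRowRect.2 (by omega)

theorem card_selfComplDiagram (k : ℕ) : Nat.card (SelfComplDiagram k) = k / 2 + 1 := by
  have hb {b : ℕ} (hb : b ∈ range (k / 2 + 1)) : b ≤ k - b := by rw [mem_range] at hb; omega
  let f (b : range (k / 2 + 1)) : SelfComplDiagram k :=
    ⟨twoRow (k - b) b (hb b.2), twoRow_le_twoRowRect (Nat.sub_le k b),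
      (rectCompl_eq_self_iff (twoRow_le_twoRowRect (Nat.sub_le k b))).2
        (by have := hb b.2; simp; omega)⟩
  have hf : Function.Bijective f := by
    refine ⟨fun b b' h => Subtype.ext ?_, fun α => ?_⟩
    · simpa [f] using congrArg (fun α : SelfComplDiagram k => α.1.rowLen 1) h
    · obtain ⟨h10, h0k, h2⟩ := rowLen_le_of_le_twoRowRect α.2.1
      have hsum := (rectCompl_eq_self_iff α.2.1).1 α.2.2
      have hα : α.1 = twoRow (k - α.1.rowLen 1) (α.1.rowLen 1) (by omega) :=
        eq_twoRow_iff.2 ⟨by omega, rfl, h2⟩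
      exact ⟨⟨α.1.rowLen 1, mem_range.2 (by omega)⟩, Subtype.ext hα.symm⟩
  rw [← Nat.card_eq_of_bijective f hf, Nat.card_eq_finsetCard, card_range]

theorem NL_twoRowRect_eq (k : ℕ) :
    NL (twoRowRect k) (twoRowRect k) (twoRowRect k) = k / 2 + 1 := by
  rw [NL, ← Nat.card_eq_of_bijective _ (SelfComplDiagram.triple_bijective k),
    card_selfComplDiagram]

theorem Nat.ceil_natCast_add_one_div_two {K : Type*} [Field K] [LinearOrder K]
    [IsStrictOrderedRing K] [FloorSemiring K] (k : ℕ) : ⌈((k : K) + 1) / 2⌉₊ = k / 2 + 1 := by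
  rw [Nat.ceil_eq_iff (Nat.add_one_ne_zero _), Nat.add_sub_cancel, lt_div_iff₀ two_pos,
    div_le_iff₀ two_pos]
  obtain ⟨m, rfl | rfl⟩ := Nat.even_or_odd' k
  · rw [Nat.mul_div_cancel_left m two_pos]
    push_cast
    constructor <;> linarith
  · rw [show (2 * m + 1) / 2 = m by omega]
    push_cast
    constructor <;> linarith

open Polynomial in
theorem not_exists_polynomial_eval_eq_div_two_add_one {K : Type*} [Field K] [CharZero K] :
    ¬ ∃ p : K[X], ∀ k : ℕ, 1 ≤ k → ((k / 2 + 1 : ℕ) : K) = p.eval (k : K) := by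
  rintro ⟨p, hp⟩
  have hline : p = C (2⁻¹ : K) * X + 1 := by
    refine eq_of_infinite_eval_eq _ _ (Set.infinite_of_injective_forall_mem
      (f := fun m : ℕ => ((2 * m + 2 : ℕ) : K)) (fun m n h => by simpa using h) fun m => ?_)
    have := hp (2 * m + 2) (by omega)
    rw [show (2 * m + 2) / 2 + 1 = m + 2 by omega] at this
    simp only [Set.mem_ofPred_eq, ← this, eval_add, eval_mul, eval_C, eval_X, eval_one]
    push_cast
    field_simp
    ring
  have h1 := hp 1 le_rfl
  rw [hline] at h1
  norm_num at h1

/-- `N_{k(1,1),k(1,1),k(1,1)} = ⌈(k+1)/2⌉` for all `k ≥ 1`; in particular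
this function of `k` is not a polynomial in `k`. -/
theorem NL_twoRowRect :
    (∀ k : ℕ, 1 ≤ k →
      NL (twoRowRect k) (twoRowRect k) (twoRowRect k) = ⌈((k : ℚ) + 1) / 2⌉₊) ∧
    ¬ ∃ p : Polynomial ℚ, ∀ k : ℕ, 1 ≤ k →
      (NL (twoRowRect k) (twoRowRect k) (twoRowRect k) : ℚ) = p.eval (k : ℚ) := by
  refine ⟨fun k _ => by rw [NL_twoRowRect_eq, Nat.ceil_natCast_add_one_div_two], ?_⟩
  simpa only [NL_twoRowRect_eq] using not_exists_polynomial_eval_eq_div_two_add_one
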